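/- Let Λ be a left and right noetherian ring such that Hom_Λ(Ext¹_Λ(M, Λ), Λ) = 0 for every finitely generated left Λ-module M (e.g., Λ is 1-Gorenstein). Then a finitely generated right Λ-module N is pure of grade 0 if and only if N is torsionless. -/

import Mathlib

open CategoryTheory
open scoped DirectSum

noncomputable section

variable (R : Type) [Ring R]

/-- The evaluation map from a module to its double dual. -/
def evalDD (M : Type) [AddCommGroup M] [Module R M] :
    M →ₗ[R] ((M →ₗ[R] R) →ₗ[Rᵐᵒᵖ] R) where
  toFun x :=
    { toFun := fun f => f x
      map_add' := fun f g => rfl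
      map_smul' := fun r f => rfl }
  map_add' x y := by ext f; simp
  map_smul' a x := by ext f; simp

variable {R} in
/-- The dual of a linear map between left modules, as a map of right modules. -/
def dualMap {M N : Type} [AddCommGroup M] [Module R M] [AddCommGroup N] [Module R N]
    (f : M →ₗ[R] N) : (N →ₗ[R] R) →ₗ[Rᵐᵒᵖ] (M →ₗ[R] R) where
  toFun g := g.comp f
  map_add' g h := by ext; simp
  map_smul' r g := by ext; simp

/-- The contravariant duality functor `Hom_R(-, R)` from left `R`-modules to right `R`-modules. -/
def dualFunctor : ModuleCat.{0} R ⥤ (ModuleCat.{0} Rᵐᵒᵖ)ᵒᵖ where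
  obj M := Opposite.op (ModuleCat.of Rᵐᵒᵖ (M →ₗ[R] R))
  map f := (ModuleCat.ofHom (dualMap f.hom)).op
  map_id M := by
    apply Quiver.Hom.unop_inj
    ext g
    rfl
  map_comp f g := by
    apply Quiver.Hom.unop_inj
    ext h
    rfl

instance : (dualFunctor R).Additive where
  map_add {M N f g} := by
    apply Quiver.Hom.unop_inj
    rw [unop_add]
    show ModuleCat.ofHom (dualMap (f + g).hom) = ModuleCat.ofHom (dualMap f.hom) + ModuleCat.ofHom (dualMap g.hom)
    refine ModuleCat.hom_ext (LinearMap.ext fun (h : ↑N →ₗ[R] R) => LinearMap.ext fun x => ?_)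
    show h ((f + g).hom x) = h (f.hom x) + h (g.hom x)
    show h (f.hom x + g.hom x) = h (f.hom x) + h (g.hom x)
    exact map_add h (f x) (g x)

/-- `Ext^n_R(M, R)` as a right `R`-module, computed from a projective resolution of `M`. -/
def extMod (n : ℕ) (M : ModuleCat.{0} R) : ModuleCat.{0} Rᵐᵒᵖ :=
  ((((dualFunctor R).mapHomologicalComplex _).obj
    (ProjectiveResolution.of M).complex).unop).homology n

/-- Vanishing of `Ext^n_R(M, R)`. -/
def extVanish (n : ℕ) (M : Type) [AddCommGroup M] [Module R M] : Prop :=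
  Subsingleton (extMod R n (ModuleCat.of R M))

/-- `grade M ≥ t` : `Ext^i_R(M, R) = 0` for all `i < t`. -/
def gradeGE (M : Type) [AddCommGroup M] [Module R M] (t : ℕ) : Prop :=
  ∀ i, i < t → extVanish R i M

/-- `grade M = k`. -/
def gradeEq (M : Type) [AddCommGroup M] [Module R M] (k : ℕ) : Prop :=
  gradeGE R M k ∧ ¬ extVanish R k M

/-- `grade M = ∞` : all `Ext^i_R(M, R)` vanish. -/
def gradeInf (M : Type) [AddCommGroup M] [Module R M] : Prop :=
  ∀ i, extVanish R i M

/-- `s.grade M ≥ t` : every non-zero submodule has grade at least `t`. -/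
def sgradeGE (M : Type) [AddCommGroup M] [Module R M] (t : ℕ) : Prop :=
  ∀ A : Submodule R M, A ≠ ⊥ → gradeGE R A t

/-- `M` is pure of grade `k` : `M` is non-zero and every non-zero submodule has grade
exactly `k`. -/
def pureGrade (M : Type) [AddCommGroup M] [Module R M] (k : ℕ) : Prop :=
  Nontrivial M ∧ ∀ A : Submodule R M, A ≠ ⊥ → gradeEq R A k

/-- The character module `Hom_ℤ(M, ℚ/ℤ)` of a module. -/
abbrev CharMod (M : Type) [AddCommGroup M] : Type := M →+ AddCircle (1 : ℚ)

/-- The right `R`-module structure on the character module of a left `R`-module. -/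
instance (M : Type) [AddCommGroup M] [Module R M] : Module Rᵐᵒᵖ (CharMod M) where
  smul r f := (f : M →+ AddCircle (1 : ℚ)).comp (DistribSMul.toAddMonoidHom M r.unop)
  one_smul f := by
    refine AddMonoidHom.ext fun x => ?_
    show f ((1 : R) • x) = f x
    rw [one_smul]
  mul_smul r s f := by
    refine AddMonoidHom.ext fun x => ?_
    show f ((s.unop * r.unop) • x) = f (s.unop • r.unop • x)
    rw [mul_smul]
  smul_zero r := by
    refine AddMonoidHom.ext fun x => ?_
    show (0 : M →+ AddCircle (1 : ℚ)) (r.unop • x) = 0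
    rfl
  smul_add r f g := by
    refine AddMonoidHom.ext fun x => ?_
    show (f + g : M →+ AddCircle (1 : ℚ)) (r.unop • x) = f (r.unop • x) + g (r.unop • x)
    rfl
  add_smul r s f := by
    refine AddMonoidHom.ext fun x => ?_
    show f ((r.unop + s.unop) • x) = f (r.unop • x) + f (s.unop • x)
    rw [add_smul, map_add]
  zero_smul f := by
    refine AddMonoidHom.ext fun x => ?_
    show f ((0 : R) • x) = 0
    rw [zero_smul, map_zero]

/-- A left `R`-module is flat iff its character module is an injective right `R`-module
(Lambek's characterization, here taken as the definition valid over noncommutative rings). -/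
def IsFlatMod (M : Type) [AddCommGroup M] [Module R M] : Prop :=
  Module.Injective Rᵐᵒᵖ (CharMod M)

/-- The flat dimension of `M` is at most `n` : there is a flat resolution of `M`
concentrated in degrees `≤ n`. -/
def flatDimLE (M : ModuleCat.{0} R) (n : ℕ) : Prop :=
  ∃ (F : ChainComplex (ModuleCat.{0} R) ℕ) (π : F ⟶ (ChainComplex.single₀ _).obj M),
    (∀ i, IsFlatMod R (F.X i)) ∧ (∀ i, n < i → Subsingleton (F.X i)) ∧ QuasiIso π

/-- The projective dimension of `M` is at most `n`. -/
def projDimLE (M : ModuleCat.{0} R) (n : ℕ) : Prop :=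
  ∃ (F : ChainComplex (ModuleCat.{0} R) ℕ) (π : F ⟶ (ChainComplex.single₀ _).obj M),
    (∀ i, Projective (F.X i)) ∧ (∀ i, n < i → Subsingleton (F.X i)) ∧ QuasiIso π

/-- The injective dimension of `M` is at most `n` : there is an injective resolution of `M`
concentrated in degrees `≤ n`. -/
def injDimLE (M : ModuleCat.{0} R) (n : ℕ) : Prop :=
  ∃ (F : CochainComplex (ModuleCat.{0} R) ℕ) (ι : (CochainComplex.single₀ _).obj M ⟶ F),
    (∀ i, Injective (F.X i)) ∧ (∀ i, n < i → Subsingleton (F.X i)) ∧ QuasiIso ι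

/-- The injective dimension of `M` is exactly `n`. -/
def injDimEq (M : ModuleCat.{0} R) (n : ℕ) : Prop :=
  injDimLE R M n ∧ ∀ m, injDimLE R M m → n ≤ m

/-- The small (left) finitistic dimension of `R` is at most `k`. -/
def finDimLE (k : ℕ) : Prop :=
  ∀ M : ModuleCat.{0} R, Module.Finite R M → (∃ n, projDimLE R M n) → projDimLE R M k

/-- The small (left) finitistic dimension of `R` is exactly `k`. -/
def finDimEq (k : ℕ) : Prop :=
  finDimLE R k ∧ ∀ m, finDimLE R m → k ≤ m

/-- A minimal injective resolution `0 → R → I 0 → I 1 → ⋯` of `R` as a module over itself. -/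
structure MinInjRes where
  I : ℕ → Type
  acg : ∀ n, AddCommGroup (I n)
  mod : ∀ n, Module R (I n)
  ι : R →ₗ[R] I 0
  d : ∀ n, I n →ₗ[R] I (n + 1)
  injective : ∀ n, Module.Injective R (I n)
  mono : Function.Injective ι
  exact0 : Function.Exact ι (d 0)
  exact : ∀ n, Function.Exact (d n) (d (n + 1))
  /-- Minimality: the kernel of each differential is an essential submodule. -/
  essential : ∀ n (K : Submodule R (I n)), K ⊓ LinearMap.ker (d n) = ⊥ → K = ⊥

attribute [instance] MinInjRes.acg MinInjRes.mod

/-- The socle (largest semisimple submodule) of a module is non-zero, i.e. the module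
contains a simple submodule. -/
def socleNeZero (M : Type) [AddCommGroup M] [Module R M] : Prop :=
  ∃ S : Submodule R M, IsSimpleModule R S

variable {R} in
/-- The transpose of a module with projective presentation `P₁ —f→ P₀ → M → 0` :
the cokernel of the dualized map `P₀* → P₁*`, a right `R`-module. -/
abbrev transposeOf {P1 P0 : Type} [AddCommGroup P1] [Module R P1] [AddCommGroup P0] [Module R P0]
    (f : P1 →ₗ[R] P0) : Type :=
  (P1 →ₗ[R] R) ⧸ LinearMap.range (dualMap f)

/-- `M` is a `k`-torsionfree module : for every finite projective presentation of `M`,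
the transpose `X` satisfies `Ext^i(X, R) = 0` for `1 ≤ i ≤ k`. -/
def isTorsionfree (k : ℕ) (M : Type) [AddCommGroup M] [Module R M] : Prop :=
  ∀ (P1 P0 : ModuleCat.{0} R), Projective P1 → Module.Finite R P1 →
    Projective P0 → Module.Finite R P0 →
    ∀ (f : P1 →ₗ[R] P0) (g : P0 →ₗ[R] M), Function.Surjective g → Function.Exact f g →
      ∀ i, 1 ≤ i → i ≤ k → extVanish Rᵐᵒᵖ i (transposeOf f)

/-- `M` is a `k`-syzygy module : there is an exact sequence
`0 → M → Q₀ → ⋯ → Q_{k-1}` with all `Qᵢ` finitely generated projective. -/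
def isSyzygy : (k : ℕ) → (M : Type) → [AddCommGroup M] → [Module R M] → Prop
  | 0, _M, _, _ => True
  | (k + 1), M, _, _ => ∃ Q : ModuleCat.{0} R, Projective Q ∧ Module.Finite R Q ∧
      ∃ f : M →ₗ[R] Q, Function.Injective f ∧ isSyzygy k (Q ⧸ LinearMap.range f)

/-- The canonical ring homomorphism `R →+* Rᵐᵒᵖᵐᵒᵖ`. -/
def opOpHom : R →+* Rᵐᵒᵖᵐᵒᵖ where
  toFun a := MulOpposite.op (MulOpposite.op a)
  map_one' := rfl
  map_mul' _ _ := rfl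
  map_zero' := rfl
  map_add' _ _ := rfl

/-- `Ext^n_R(N, R)` of a right `R`-module `N`, as a left `R`-module (restricting scalars
along the canonical identification `R ≅ Rᵐᵒᵖᵐᵒᵖ`). -/
def extModL (n : ℕ) (N : ModuleCat.{0} Rᵐᵒᵖ) : Type := extMod Rᵐᵒᵖ n N

instance (n : ℕ) (N : ModuleCat.{0} Rᵐᵒᵖ) : AddCommGroup (extModL R n N) :=
  inferInstanceAs (AddCommGroup (extMod Rᵐᵒᵖ n N))

instance (n : ℕ) (N : ModuleCat.{0} Rᵐᵒᵖ) : Module R (extModL R n N) :=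
  Module.compHom (extMod Rᵐᵒᵖ n N) (opOpHom R)

/-- A module is torsionless if the evaluation map into its double dual is injective. -/
def Torsionless (M : Type) [AddCommGroup M] [Module R M] : Prop :=
  Function.Injective (evalDD R M)

/-- A non-zero module is uniform if each of its non-zero submodules is essential. -/
def IsUniform (M : Type) [AddCommGroup M] [Module R M] : Prop :=
  Nontrivial M ∧ ∀ A : Submodule R M, A ≠ ⊥ → ∀ B : Submodule R M, A ⊓ B = ⊥ → B = ⊥

/-- An indecomposable module: non-zero, and admitting no non-trivial direct sum
decomposition. -/
def IsIndecomposableMod (M : Type) [AddCommGroup M] [Module R M] : Prop :=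
  Nontrivial M ∧ ∀ A B : Submodule R M, IsCompl A B → A = ⊥ ∨ B = ⊥

/-- `N` embeds into a finite direct sum of copies of `E`. -/
def embedsInFinSum (N : Type) [AddCommGroup N] [Module R N]
    (E : Type) [AddCommGroup E] [Module R E] : Prop :=
  ∃ (n : ℕ) (φ : N →ₗ[R] (Fin n → E)), Function.Injective φ

end
noncomputable section Aux
open CategoryTheory CategoryTheory.Limits

namespace Stmt11

variable {R : Type} [Ring R]

theorem factor_through {A B C : Type} [AddCommGroup A] [Module R A] [AddCommGroup B] [Module R B]
    [AddCommGroup C] [Module R C] (u : A →ₗ[R] B) (hu : Function.Surjective u)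
    (φ : A →ₗ[R] C) (h : LinearMap.ker u ≤ LinearMap.ker φ) :
    ∃ ψ : B →ₗ[R] C, ψ.comp u = φ := by
  refine ⟨((LinearMap.ker u).liftQ φ h).comp (u.quotKerEquivOfSurjective hu).symm.toLinearMap, ?_⟩
  ext a
  have h0 : (u.quotKerEquivOfSurjective hu) (Submodule.Quotient.mk a) = u a := rfl
  have h1 : (u.quotKerEquivOfSurjective hu).symm (u a) = Submodule.Quotient.mk a := by
    apply (u.quotKerEquivOfSurjective hu).injective
    rw [LinearEquiv.apply_symm_apply, h0]
  simp [h1]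

variable (R) in
/-- The dual complex of the chosen projective resolution of `M`. -/
abbrev dcplx (M : ModuleCat.{0} R) :
    HomologicalComplex (ModuleCat.{0} Rᵐᵒᵖ) ((ComplexShape.down ℕ).symm) :=
  ((((dualFunctor R).mapHomologicalComplex _).obj (ProjectiveResolution.of M).complex).unop)

section Resolution

variable (R) in
/-- The augmentation `P₀ → M` of the chosen projective resolution, as a linear map. -/
def aug (M : ModuleCat.{0} R) :
    ↑((ProjectiveResolution.of M).complex.X 0) →ₗ[R] ↑M :=
  ((ProjectiveResolution.of M).π.f 0 ≫
    (HomologicalComplex.singleObjXSelf (ComplexShape.down ℕ) 0 M).hom : _ ⟶ M).hom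

theorem aug_surjective (M : ModuleCat.{0} R) : Function.Surjective (aug R M) := by
  have h1 : Epi ((ProjectiveResolution.of M).π.f 0 ≫
      (HomologicalComplex.singleObjXSelf (ComplexShape.down ℕ) 0 M).hom) :=
    epi_comp _ _
  exact (ModuleCat.epi_iff_surjective _).mp h1

theorem range_d10 (M : ModuleCat.{0} R) :
    LinearMap.range (((ProjectiveResolution.of M).complex.d 1 0).hom :
      ↑((ProjectiveResolution.of M).complex.X 1) →ₗ[R] ↑((ProjectiveResolution.of M).complex.X 0))
      = LinearMap.ker (aug R M) := by
  set P := ProjectiveResolution.of M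
  apply le_antisymm
  · rintro x ⟨y, rfl⟩
    have : (P.complex.d 1 0 ≫ P.π.f 0) y = 0 := by
      rw [P.complex_d_comp_π_f_zero]; rfl
    show aug R M (P.complex.d 1 0 y) = 0
    show ((HomologicalComplex.singleObjXSelf (ComplexShape.down ℕ) 0 M).hom)
      ((P.π.f 0) (P.complex.d 1 0 y)) = 0
    have h3 : (P.π.f 0) (P.complex.d 1 0 y) = 0 := this
    rw [h3, map_zero]
  · intro x hx
    -- use the cokernel colimit
    let t : P.complex.X 0 ⟶ ModuleCat.of R
        (↑(P.complex.X 0) ⧸ LinearMap.range (P.complex.d 1 0).hom) :=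
      ModuleCat.ofHom (LinearMap.range (P.complex.d 1 0).hom).mkQ
    have ht : P.complex.d 1 0 ≫ t = 0 := by
      ext y
      show Submodule.Quotient.mk (P.complex.d 1 0 y) = 0
      rw [Submodule.Quotient.mk_eq_zero]
      exact ⟨y, rfl⟩
    obtain ⟨u, hu⟩ := CokernelCofork.IsColimit.desc' P.isColimitCokernelCofork t ht
    have hu' : P.π.f 0 ≫ u = t := by
      exact hu
    have hx0 : P.π.f 0 x = 0 := by
      have h2 : Function.Injective
          ((HomologicalComplex.singleObjXSelf (ComplexShape.down ℕ) 0 M).hom) :=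
        (ModuleCat.mono_iff_injective _).mp inferInstance
      apply h2
      rw [map_zero]; exact hx
    have : t x = 0 := by
      rw [← hu']
      show u (P.π.f 0 x) = 0
      erw [hx0]; exact map_zero u.hom
    rwa [show t x = Submodule.Quotient.mk x from rfl, Submodule.Quotient.mk_eq_zero] at this

end Resolution

end Stmt11
end Aux
noncomputable section Aux2
open CategoryTheory CategoryTheory.Limits
namespace Stmt11
variable {R : Type} [Ring R]

theorem shape_rel_succ (i : ℕ) : ((ComplexShape.down ℕ).symm).Rel i (i + 1) := by
  simp [ComplexShape.down, ComplexShape.symm]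

theorem shape_norel_zero (i : ℕ) : ¬ ((ComplexShape.down ℕ).symm).Rel i 0 := by
  simp [ComplexShape.down, ComplexShape.symm]

variable (R) in
abbrev S0 (M : ModuleCat.{0} R) : ShortComplex (ModuleCat.{0} Rᵐᵒᵖ) :=
  (dcplx R M).sc' (((ComplexShape.down ℕ).symm).prev 0) 0 1

variable (R) in
theorem extVanish_zero_iff (M : Type) [AddCommGroup M] [Module R M] :
    extVanish R 0 M ↔ ∀ f : M →ₗ[R] R, f = 0 := by
  have hnext : ((ComplexShape.down ℕ).symm).next 0 = 1 :=
    ComplexShape.next_eq' _ (shape_rel_succ 0)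
  let Mc := ModuleCat.of R M
  let e₁ : (↑((dcplx R Mc).homology 0) : Type) ≃ₗ[Rᵐᵒᵖ] ↑(S0 R Mc).moduleCatLeftHomologyData.H :=
    (((dcplx R Mc).homologyIsoSc' _ 0 1 rfl hnext) ≪≫
      (S0 R Mc).moduleCatHomologyIso).toLinearEquiv
  have hf0 : (S0 R Mc).f = 0 := (dcplx R Mc).shape _ 0 (shape_norel_zero _)
  have hbot : LinearMap.range (S0 R Mc).moduleCatToCycles = ⊥ := by
    rw [Submodule.eq_bot_iff]
    rintro y ⟨x, rfl⟩
    refine Subtype.ext ?_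
    show (S0 R Mc).f x = 0
    rw [hf0]
    rfl
  let e₂ : ↑(S0 R Mc).moduleCatLeftHomologyData.H ≃ₗ[Rᵐᵒᵖ] ↥(LinearMap.ker (S0 R Mc).g.hom) :=
    Submodule.quotEquivOfEqBot _ hbot
  let jmap : (M →ₗ[R] R) →ₗ[Rᵐᵒᵖ] ↥(LinearMap.ker (S0 R Mc).g.hom) :=
    { toFun := fun ψ => ⟨ψ.comp (aug R Mc), by
        show (dualMap ((ProjectiveResolution.of Mc).complex.d 1 0).hom) (ψ.comp (aug R Mc)) = 0
        ext y
        show ψ (aug R Mc ((ProjectiveResolution.of Mc).complex.d 1 0 y)) = 0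
        have hy : (ProjectiveResolution.of Mc).complex.d 1 0 y ∈ LinearMap.ker (aug R Mc) := by
          rw [← range_d10]; exact ⟨y, rfl⟩
        rw [LinearMap.mem_ker.mp hy, map_zero]⟩
      map_add' := fun ψ χ => Subtype.ext (by
        show (ψ + χ).comp (aug R Mc) = ψ.comp (aug R Mc) + χ.comp (aug R Mc)
        ext x; rfl)
      map_smul' := fun r ψ => Subtype.ext (by
        show (r • ψ).comp (aug R Mc) = r • (ψ.comp (aug R Mc))
        ext x; rfl) }
  have hjbij : Function.Bijective jmap := by
    constructor
    · intro ψ ψ' hψ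
      ext m
      obtain ⟨x, rfl⟩ := aug_surjective Mc m
      have h3 : ψ.comp (aug R Mc) = ψ'.comp (aug R Mc) := congrArg Subtype.val hψ
      exact DFunLike.congr_fun h3 x
    · rintro ⟨φ0, hφ⟩
      let φ : ↑((ProjectiveResolution.of Mc).complex.X 0) →ₗ[R] R := φ0
      have hφ' : ∀ y, φ ((ProjectiveResolution.of Mc).complex.d 1 0 y) = 0 := by
        intro y
        have h2 : (dualMap ((ProjectiveResolution.of Mc).complex.d 1 0).hom) φ = 0 := hφ
        exact DFunLike.congr_fun h2 y
      have hle : LinearMap.ker (aug R Mc) ≤ LinearMap.ker φ := by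
        intro x hx
        rw [← range_d10] at hx
        obtain ⟨y, rfl⟩ := hx
        exact hφ' y
      obtain ⟨ψ, hψ⟩ := factor_through (aug R Mc) (aug_surjective Mc) φ hle
      exact ⟨ψ, Subtype.ext hψ⟩
  let e : (↑((dcplx R Mc).homology 0) : Type) ≃ₗ[Rᵐᵒᵖ] (M →ₗ[R] R) :=
    e₁.trans (e₂.trans (LinearEquiv.ofBijective jmap hjbij).symm)
  have hiff : extVanish R 0 M ↔ Subsingleton (M →ₗ[R] R) := Equiv.subsingleton_congr e.toEquiv
  rw [hiff]
  exact subsingleton_iff_forall_eq 0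
end Stmt11
end Aux2
noncomputable section Aux3
open CategoryTheory CategoryTheory.Limits
namespace Stmt11
variable {R : Type} [Ring R]

variable (R) in
abbrev S1 (M : ModuleCat.{0} R) : ShortComplex (ModuleCat.{0} Rᵐᵒᵖ) :=
  (dcplx R M).sc' 0 1 2

variable (R) in
theorem extOne_surjective (M Q : ModuleCat.{0} R) (hQ : Projective Q)
    (q' : ↑Q →ₗ[R] ↑M) (hq' : Function.Surjective q') :
    ∃ e : ↑(extMod R 1 M) →ₗ[Rᵐᵒᵖ]
      ((↥(LinearMap.ker q') →ₗ[R] R) ⧸ LinearMap.range (dualMap (LinearMap.ker q').subtype)),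
      Function.Surjective e := by
  classical
  have hprev : ((ComplexShape.down ℕ).symm).prev 1 = 0 :=
    ComplexShape.prev_eq' _ (shape_rel_succ 0)
  have hnext : ((ComplexShape.down ℕ).symm).next 1 = 2 :=
    ComplexShape.next_eq' _ (shape_rel_succ 1)
  let P := ProjectiveResolution.of M
  let e₁ : (↑(extMod R 1 M) : Type) ≃ₗ[Rᵐᵒᵖ] ↑(S1 R M).moduleCatLeftHomologyData.H :=
    (show extMod R 1 M ≅ (S1 R M).moduleCatLeftHomologyData.H from
      ((dcplx R M).homologyIsoSc' 0 1 2 hprev hnext) ≪≫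
        (S1 R M).moduleCatHomologyIso).toLinearEquiv
  -- W₀ = ker(aug) and the corestriction of d 1 0
  let W₀ : Submodule R ↑(P.complex.X 0) := LinearMap.ker (aug R M)
  have hd10W : ∀ y, (P.complex.d 1 0).hom y ∈ W₀ := by
    intro y
    rw [show W₀ = LinearMap.ker (aug R M) from rfl, ← range_d10]
    exact ⟨y, rfl⟩
  let d10W : ↑(P.complex.X 1) →ₗ[R] ↥W₀ :=
    (P.complex.d 1 0).hom.codRestrict W₀ hd10W
  have hd10Wsurj : Function.Surjective d10W := by
    rintro ⟨w, hw⟩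
    rw [show W₀ = LinearMap.ker (aug R M) from rfl, ← range_d10 M] at hw
    obtain ⟨y, hy⟩ := hw
    exact ⟨y, Subtype.ext hy⟩
  have hexact : ∀ y : ↑(P.complex.X 1), (P.complex.d 1 0) y = 0 →
      ∃ z : ↑(P.complex.X 2), (P.complex.d 2 1) z = y := by
    intro y hy
    have h4 := (P.exact_succ 0)
    rw [ShortComplex.moduleCat_exact_iff] at h4
    exact h4 y hy
  -- the equivalence jmap : W₀^∨ ≃ ker (S1.g)
  let jmap : (↥W₀ →ₗ[R] R) →ₗ[Rᵐᵒᵖ] ↥(LinearMap.ker (S1 R M).g.hom) :=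
    { toFun := fun ψ => ⟨ψ.comp d10W, by
        show (dualMap (P.complex.d 2 1).hom) (ψ.comp d10W) = 0
        ext z
        show ψ (d10W ((P.complex.d 2 1) z)) = 0
        have hz : d10W ((P.complex.d 2 1) z) = 0 := by
          refine Subtype.ext ?_
          show (P.complex.d 1 0) ((P.complex.d 2 1) z) = 0
          have h5 : (P.complex.d 2 1 ≫ P.complex.d 1 0) z = 0 := by
            rw [P.complex.d_comp_d]; rfl
          exact h5
        rw [hz, map_zero]⟩
      map_add' := fun ψ χ => Subtype.ext (by
        show (ψ + χ).comp d10W = ψ.comp d10W + χ.comp d10W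
        ext x; rfl)
      map_smul' := fun r ψ => Subtype.ext (by
        show (r • ψ).comp d10W = r • (ψ.comp d10W)
        ext x; rfl) }
  have hjbij : Function.Bijective jmap := by
    constructor
    · intro ψ ψ' hψ
      ext w
      obtain ⟨y, rfl⟩ := hd10Wsurj w
      have h3 : ψ.comp d10W = ψ'.comp d10W := congrArg Subtype.val hψ
      exact DFunLike.congr_fun h3 y
    · rintro ⟨φ0, hφ⟩
      let φ : ↑(P.complex.X 1) →ₗ[R] R := φ0
      have hφ2 : (dualMap (P.complex.d 2 1).hom) φ = 0 := hφ
      have hle : LinearMap.ker d10W ≤ LinearMap.ker φ := by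
        intro y hy
        have hy0 : (P.complex.d 1 0) y = 0 := congrArg Subtype.val (LinearMap.mem_ker.mp hy)
        obtain ⟨z, rfl⟩ := hexact y hy0
        exact DFunLike.congr_fun hφ2 z
      obtain ⟨ψ, hψ⟩ := factor_through d10W hd10Wsurj φ hle
      exact ⟨ψ, Subtype.ext hψ⟩
  let jequiv := LinearEquiv.ofBijective jmap hjbij
  -- the lifts α, β
  haveI := hQ
  haveI : Projective (P.complex.X 0) := P.projective 0
  haveI : Epi (ModuleCat.ofHom (aug R M)) :=
    (ModuleCat.epi_iff_surjective _).mpr (aug_surjective M)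
  haveI : Epi (ModuleCat.ofHom q') := (ModuleCat.epi_iff_surjective _).mpr hq'
  let βh : Q ⟶ P.complex.X 0 :=
    Projective.factorThru (ModuleCat.ofHom q') (ModuleCat.ofHom (aug R M))
  have hβ : ∀ x, aug R M (βh x) = q' x := by
    intro x
    have h8 := Projective.factorThru_comp (ModuleCat.ofHom q')
      (ModuleCat.ofHom (aug R M))
    exact DFunLike.congr_fun (congrArg (fun (f : Q ⟶ M) => f.hom) h8) x
  let αh : P.complex.X 0 ⟶ Q :=
    Projective.factorThru (ModuleCat.ofHom (aug R M)) (ModuleCat.ofHom q')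
  have hα : ∀ z, q' (αh z) = aug R M z := by
    intro z
    have h8 := Projective.factorThru_comp (ModuleCat.ofHom (aug R M))
      (ModuleCat.ofHom q')
    exact DFunLike.congr_fun (congrArg (fun (f : P.complex.X 0 ⟶ M) =>
      f.hom) h8) z
  let W : Submodule R ↑Q := LinearMap.ker q'
  let βW : ↥W →ₗ[R] ↥W₀ := βh.hom.restrict (fun x hx => by
    show aug R M (βh x) = 0
    rw [hβ x]
    exact hx)
  let αW : ↥W₀ →ₗ[R] ↥W := αh.hom.restrict (fun z hz => by
    show q' (αh z) = 0
    rw [hα z]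
    exact hz)
  let resW : (↑Q →ₗ[R] R) →ₗ[Rᵐᵒᵖ] (↥W →ₗ[R] R) := dualMap W.subtype
  let Ψ : (↥W₀ →ₗ[R] R) →ₗ[Rᵐᵒᵖ] (↥W →ₗ[R] R) :=
    { toFun := fun ζ => ζ.comp βW
      map_add' := fun a b => by ext x; rfl
      map_smul' := fun r a => by ext x; rfl }
  let Θ₁ : ↥(LinearMap.ker (S1 R M).g.hom) →ₗ[Rᵐᵒᵖ] 
      ((↥W →ₗ[R] R) ⧸ LinearMap.range resW) :=
    (LinearMap.range resW).mkQ ∘ₗ (Ψ ∘ₗ jequiv.symm.toLinearMap)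
  have hθval : ∀ ζ : ↥W₀ →ₗ[R] R, Θ₁ (jmap ζ) = Submodule.Quotient.mk (Ψ ζ) := by
    intro ζ
    show (LinearMap.range resW).mkQ (Ψ (jequiv.symm (jequiv ζ))) = _
    rw [jequiv.symm_apply_apply]
    rfl
  have hkill : ∀ x : ↑(S1 R M).X₁, Θ₁ ((S1 R M).moduleCatToCycles x) = 0 := by
    intro χ0
    let χ : ↑(P.complex.X 0) →ₗ[R] R := χ0
    have h6 : jmap (dualMap W₀.subtype χ) = (S1 R M).moduleCatToCycles χ0 := by
      refine Subtype.ext ?_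
      show (dualMap W₀.subtype χ).comp d10W = (S1 R M).f χ0
      ext y
      rfl
    rw [← h6, hθval]
    rw [Submodule.Quotient.mk_eq_zero]
    refine ⟨χ.comp βh.hom, ?_⟩
    ext w
    rfl
  let e₂ : ↑(S1 R M).moduleCatLeftHomologyData.H →ₗ[Rᵐᵒᵖ]
      ((↥W →ₗ[R] R) ⧸ LinearMap.range resW) :=
    Submodule.liftQ _ Θ₁ (by
      rintro y ⟨x, rfl⟩
      exact hkill x)
  have hΘ₁surj : Function.Surjective Θ₁ := by
    intro t
    obtain ⟨ξ, rfl⟩ := Submodule.mkQ_surjective _ t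
    refine ⟨jmap (ξ.comp αW), ?_⟩
    rw [hθval]
    show Submodule.Quotient.mk ((ξ.comp αW).comp βW) = Submodule.Quotient.mk ξ
    rw [Submodule.Quotient.eq]
    -- (ξ ∘ αW ∘ βW) - ξ = resW (ξ ∘ δ')
    let αβ : ↑Q →ₗ[R] ↑Q :=
      (αh.hom.comp βh.hom) - LinearMap.id
    have hαβ : ∀ x, αβ x ∈ W := by
      intro x
      show q' (αh (βh x) - x) = 0
      rw [map_sub, hα, hβ, sub_self]
    let δ' : ↑Q →ₗ[R] ↥W := αβ.codRestrict W hαβ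
    refine ⟨ξ.comp δ', ?_⟩
    ext w
    show ξ (δ' (w : ↑Q)) = ξ (αW (βW w)) - ξ w
    rw [← map_sub]
    exact congrArg ξ (Subtype.ext rfl)
  have he₂surj : Function.Surjective e₂ := by
    intro t
    obtain ⟨x, hx⟩ := hΘ₁surj t
    exact ⟨Submodule.Quotient.mk x, hx⟩
  refine ⟨e₂ ∘ₗ (e₁ : _ →ₗ[Rᵐᵒᵖ] _), ?_⟩
  intro t
  obtain ⟨y, hy⟩ := he₂surj t
  obtain ⟨x, hx⟩ := e₁.surjective y
  refine ⟨x, ?_⟩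
  show e₂ (e₁ x) = t
  rw [hx, hy]
end Stmt11
end Aux3
noncomputable section Aux4
namespace Stmt11
open MulOpposite
variable {Λ : Type} [Ring Λ]

def pairL {k : ℕ} (u : Fin k → Λ) (x : Fin k → Λᵐᵒᵖ) : Λ :=
  ∑ j, u j * unop (x j)

theorem pairL_add_left {k} (u v : Fin k → Λ) (x) :
    pairL (u + v) x = pairL u x + pairL v x := by
  simp [pairL, add_mul, Finset.sum_add_distrib]

theorem pairL_smul_left {k} (c : Λ) (u) (x : Fin k → Λᵐᵒᵖ) :
    pairL (c • u) x = c * pairL u x := by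
  simp [pairL, Finset.mul_sum, mul_assoc]

theorem pairL_add_right {k} (u : Fin k → Λ) (x y) :
    pairL u (x + y) = pairL u x + pairL u y := by
  simp [pairL, mul_add, Finset.sum_add_distrib]

theorem pairL_smul_right {k} (c : Λᵐᵒᵖ) (u : Fin k → Λ) (x) :
    pairL u (c • x) = pairL u x * unop c := by
  simp [pairL, Finset.sum_mul, mul_assoc]

theorem pairL_zero_left {k} (x : Fin k → Λᵐᵒᵖ) : pairL (0 : Fin k → Λ) x = 0 := by
  simp [pairL]

theorem pairL_single_left {k} (j : Fin k) (x : Fin k → Λᵐᵒᵖ) :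
    pairL (Pi.single j 1) x = unop (x j) := by
  rw [pairL, Finset.sum_eq_single j]
  · simp
  · intro i _ hij
    simp [Pi.single_apply, Ne.symm hij]
  · simp

theorem pairL_single_right {k} (u : Fin k → Λ) (j : Fin k) :
    pairL u (Pi.single j 1) = u j := by
  rw [pairL, Finset.sum_eq_single j]
  · simp
  · intro i _ hij
    simp [Pi.single_apply, hij]
  · simp

theorem sum_single_smul {S : Type} [Semiring S] {k : ℕ} (x : Fin k → S) :
    ∑ j, x j • (Pi.single j (1 : S) : Fin k → S) = x := by
  funext i
  simp [Finset.sum_apply, Pi.single_apply, mul_ite]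

theorem rep_right {k} (ψ : (Fin k → Λᵐᵒᵖ) →ₗ[Λᵐᵒᵖ] Λᵐᵒᵖ) (x : Fin k → Λᵐᵒᵖ) :
    ψ x = op (pairL (fun j => unop (ψ (Pi.single j 1))) x) := by
  conv_lhs => rw [← sum_single_smul x]
  rw [map_sum]
  apply unop_injective
  simp [pairL, smul_eq_mul, map_smul]

theorem rep_left {k} (χ : (Fin k → Λ) →ₗ[Λ] Λ) (u : Fin k → Λ) :
    χ u = pairL u (fun i => op (χ (Pi.single i 1))) := by
  conv_lhs => rw [← sum_single_smul u]
  rw [map_sum]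
  simp [pairL, smul_eq_mul, map_smul]

/-- `φ_u` : the right-linear functional attached to `u`. -/
def phiL {k : ℕ} (u : Fin k → Λ) : (Fin k → Λᵐᵒᵖ) →ₗ[Λᵐᵒᵖ] Λᵐᵒᵖ where
  toFun x := op (pairL u x)
  map_add' x y := by simp [pairL_add_right]
  map_smul' c x := by simp [pairL_smul_right]

end Stmt11
end Aux4
noncomputable section Aux5
open CategoryTheory MulOpposite
namespace Stmt11

theorem main (Λ : Type) [Ring Λ]
    [IsNoetherianRing Λ] [IsNoetherianRing Λᵐᵒᵖ]
    (h : ∀ M : ModuleCat.{0} Λ, Module.Finite Λ M →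
      ∀ g : ↑(extMod Λ 1 M) →ₗ[Λᵐᵒᵖ] Λᵐᵒᵖ, g = 0)
    (N : ModuleCat.{0} Λᵐᵒᵖ) (hNfg : Module.Finite Λᵐᵒᵖ N) (hN0 : Nontrivial N) :
    pureGrade Λᵐᵒᵖ N 0 ↔ Torsionless Λᵐᵒᵖ N := by
  classical
  constructor
  · -- pure of grade 0 → torsionless
    intro hpure
    have hKbot : LinearMap.ker (evalDD Λᵐᵒᵖ ↑N) = ⊥ := by
      by_contra hne
      set K := LinearMap.ker (evalDD Λᵐᵒᵖ ↑N) with hKdef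
      have hgrade : ¬ extVanish Λᵐᵒᵖ 0 ↥K := (hpure.2 K hne).2
      rw [extVanish_zero_iff] at hgrade
      obtain ⟨g, hg⟩ : ∃ g : ↥K →ₗ[Λᵐᵒᵖ] Λᵐᵒᵖ, g ≠ 0 := by
        by_contra hc
        push_neg at hc
        exact hgrade hc
      obtain ⟨gw, hgw⟩ : ∃ w : ↥K, g w ≠ 0 := by
        by_contra hc
        push_neg at hc
        exact hg (LinearMap.ext hc)
      -- a finite presentation of N
      obtain ⟨n, q, hq⟩ := Module.Finite.exists_fin' Λᵐᵒᵖ ↑N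
      haveI : Module.Finite Λᵐᵒᵖ ↥(LinearMap.ker q) :=
        Module.Finite.iff_fg.mpr (IsNoetherian.noetherian _)
      obtain ⟨m, q2, hq2⟩ := Module.Finite.exists_fin' Λᵐᵒᵖ ↥(LinearMap.ker q)
      let p : (Fin m → Λᵐᵒᵖ) →ₗ[Λᵐᵒᵖ] (Fin n → Λᵐᵒᵖ) := (LinearMap.ker q).subtype ∘ₗ q2
      have hrangep : ∀ x, x ∈ LinearMap.ker q ↔ ∃ y, p y = x := by
        intro x
        constructor
        · intro hx
          obtain ⟨y, hy⟩ := hq2 ⟨x, hx⟩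
          exact ⟨y, congrArg Subtype.val hy⟩
        · rintro ⟨y, rfl⟩
          exact (q2 y).2
      have hqp : ∀ y, q (p y) = 0 := fun y => (hrangep (p y)).mpr ⟨y, rfl⟩
      -- the transposed map
      let pT : (Fin n → Λ) →ₗ[Λ] (Fin m → Λ) :=
        { toFun := fun u i => pairL u (p (Pi.single i 1))
          map_add' := fun u v => by funext i; exact pairL_add_left u v _
          map_smul' := fun c u => by funext i; exact pairL_smul_left c u _ }
      have hadj : ∀ (u : Fin n → Λ) (y : Fin m → Λᵐᵒᵖ),
          pairL (pT u) y = pairL u (p y) := by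
        intro u y
        have h1 := rep_right ((phiL u).comp p) y
        have h2 : (fun j => unop (((phiL u).comp p) (Pi.single j 1))) = pT u := by
          funext j; rfl
        rw [h2] at h1
        have h3 : op (pairL u (p y)) = op (pairL (pT u) y) := h1
        exact (op_injective h3).symm
      -- M := coker pT
      let Wr : Submodule Λ (Fin m → Λ) := LinearMap.range pT
      let Mq : ModuleCat.{0} Λ := ModuleCat.of Λ ((Fin m → Λ) ⧸ Wr)
      have hMqfin : Module.Finite Λ ↑Mq := by
        show Module.Finite Λ ((Fin m → Λ) ⧸ Wr)
        infer_instance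
      let π' : (Fin m → Λ) →ₗ[Λ] ((Fin m → Λ) ⧸ Wr) := Wr.mkQ
      have hQproj : Projective (ModuleCat.of Λ (Fin m → Λ)) :=
        ModuleCat.projective_of_free (Pi.basisFun Λ (Fin m))
      obtain ⟨e, hesurj⟩ := extOne_surjective Λ Mq (ModuleCat.of Λ (Fin m → Λ)) hQproj π'
        (Submodule.mkQ_surjective _)
      let W : Submodule Λ (Fin m → Λ) := LinearMap.ker π'
      have hmemW : ∀ v : Fin m → Λ, v ∈ W ↔ ∃ u, pT u = v := by
        intro v
        show π' v = 0 ↔ _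
        rw [show π' v = Submodule.Quotient.mk v from rfl, Submodule.Quotient.mk_eq_zero]
        exact Iff.rfl
      let wj : (j : Fin n) → ↥W := fun j => ⟨pT (Pi.single j 1), (hmemW _).mpr ⟨_, rfl⟩⟩
      let Θ : (↥W →ₗ[Λ] Λ) →ₗ[Λᵐᵒᵖ] ↑N :=
        { toFun := fun ξ => q (fun j => op (ξ (wj j)))
          map_add' := fun ξ ζ => by
            rw [← map_add]
            congr 1
          map_smul' := fun c ξ => by
            show q _ = c • q _
            rw [← map_smul]
            congr 1 }
      have hkill : ∀ χ : (Fin m → Λ) →ₗ[Λ] Λ, Θ (dualMap W.subtype χ) = 0 := by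
        intro χ
        have hcoord : (fun j => op ((dualMap W.subtype χ) (wj j)))
            = p (fun i => op (χ (Pi.single i 1))) := by
          funext j
          show op (χ (pT (Pi.single j 1))) = p (fun i => op (χ (Pi.single i 1))) j
          rw [rep_left χ (pT (Pi.single j 1)), hadj, pairL_single_left]
          exact op_unop _
        show q (fun j => op ((dualMap W.subtype χ) (wj j))) = 0
        rw [hcoord]
        exact hqp _
      let Θq : ((↥W →ₗ[Λ] Λ) ⧸ LinearMap.range (dualMap W.subtype)) →ₗ[Λᵐᵒᵖ] ↑N :=
        Submodule.liftQ _ Θ (by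
          rintro ζ ⟨χ, rfl⟩
          exact hkill χ)
      let G : ↑(extMod Λ 1 Mq) →ₗ[Λᵐᵒᵖ] ↑N := Θq ∘ₗ e
      have hΘK : ∀ ξ : ↥W →ₗ[Λ] Λ, Θ ξ ∈ K := by
        intro ξ
        rw [hKdef]
        rw [LinearMap.mem_ker]
        refine LinearMap.ext fun f => ?_
        show f (Θ ξ) = 0
        have hpTu : pT (fun j => unop ((f ∘ₗ q) (Pi.single j 1))) = 0 := by
          funext i
          show pairL (fun j => unop ((f ∘ₗ q) (Pi.single j 1))) (p (Pi.single i 1)) = 0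
          have h1 := rep_right (f ∘ₗ q) (p (Pi.single i 1))
          have h2 : (f ∘ₗ q) (p (Pi.single i 1)) = 0 := by
            show f (q (p (Pi.single i 1))) = 0
            rw [hqp, map_zero]
          rw [h2] at h1
          simpa using congrArg unop h1.symm
        have h3 : f (Θ ξ) = op (pairL (fun j => unop ((f ∘ₗ q) (Pi.single j 1)))
            (fun j => op (ξ (wj j)))) := rep_right (f ∘ₗ q) _
        rw [h3]
        have h4 : pairL (fun j => unop ((f ∘ₗ q) (Pi.single j 1)))
            (fun j => op (ξ (wj j)))
            = ξ (∑ j, (fun j => unop ((f ∘ₗ q) (Pi.single j 1))) j • wj j) := by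
          rw [map_sum, pairL]
          refine Finset.sum_congr rfl fun j _ => ?_
          rw [map_smul, unop_op]
          rfl
        rw [h4]
        have h5 : (∑ j, (fun j => unop ((f ∘ₗ q) (Pi.single j 1))) j • wj j) = (0 : ↥W) := by
          refine Subtype.ext ?_
          show ((∑ j, (fun j => unop ((f ∘ₗ q) (Pi.single j 1))) j • wj j : ↥W)
            : Fin m → Λ) = 0
          rw [Submodule.coe_sum]
          calc (∑ j, ((fun j => unop ((f ∘ₗ q) (Pi.single j 1))) j • wj j : ↥W).val)
              = ∑ j, (fun j => unop ((f ∘ₗ q) (Pi.single j 1))) j • pT (Pi.single j 1) := by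
                refine Finset.sum_congr rfl fun j _ => rfl
            _ = pT (∑ j, (fun j => unop ((f ∘ₗ q) (Pi.single j 1))) j
                  • (Pi.single j (1:Λ) : Fin n → Λ)) := by
                rw [map_sum]
                refine Finset.sum_congr rfl fun j _ => ?_
                rw [map_smul]
            _ = pT (fun j => unop ((f ∘ₗ q) (Pi.single j 1))) := by rw [sum_single_smul]
            _ = 0 := hpTu
        rw [h5, map_zero, op_zero]
      have hGmem : ∀ z, G z ∈ K := by
        intro z
        obtain ⟨ξ, hξ⟩ := Submodule.mkQ_surjective _ (e z)
        have hGz : G z = Θ ξ := by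
          show Θq (e z) = Θ ξ
          rw [← hξ]
          rfl
        rw [hGz]
        exact hΘK ξ
      have hKsub : ∀ kk : ↑N, kk ∈ K → ∃ z, G z = kk := by
        intro kk hkk
        obtain ⟨v₀, hv₀⟩ := hq kk
        let lam : (Fin n → Λ) →ₗ[Λ] Λ :=
          { toFun := fun u => pairL u v₀
            map_add' := fun a b => pairL_add_left a b v₀
            map_smul' := fun c a => pairL_smul_left c a v₀ }
        let pT' : (Fin n → Λ) →ₗ[Λ] ↥W := pT.codRestrict W (fun u => (hmemW _).mpr ⟨u, rfl⟩)
        have hpT'surj : Function.Surjective pT' := by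
          rintro ⟨w, hw⟩
          obtain ⟨u, hu⟩ := (hmemW w).mp hw
          exact ⟨u, Subtype.ext hu⟩
        have hle : LinearMap.ker pT' ≤ LinearMap.ker lam := by
          intro u hu
          have hpTu0 : pT u = 0 := congrArg Subtype.val (LinearMap.mem_ker.mp hu)
          have hker : LinearMap.ker q ≤ LinearMap.ker (phiL u) := by
            intro x hx
            obtain ⟨y, rfl⟩ := (hrangep x).mp hx
            show op (pairL u (p y)) = 0
            rw [← hadj, hpTu0, pairL_zero_left, op_zero]
          obtain ⟨f, hf⟩ := factor_through q hq (phiL u) hker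
          have h7 : op (pairL u v₀) = f kk := by
            rw [← hv₀]
            exact (DFunLike.congr_fun hf v₀).symm
          have h8 : f kk = 0 := DFunLike.congr_fun (LinearMap.mem_ker.mp hkk) f
          show pairL u v₀ = 0
          simpa using congrArg unop (h7.trans h8)
        obtain ⟨ξ₀, hξ₀⟩ := factor_through pT' hpT'surj lam hle
        have hΘξ₀ : Θ ξ₀ = kk := by
          show q (fun j => op (ξ₀ (wj j))) = kk
          have hco : (fun j => op (ξ₀ (wj j))) = v₀ := by
            funext j
            have h9 : ξ₀ (wj j) = lam (Pi.single j 1) := by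
              rw [← hξ₀]
              rfl
            rw [h9]
            show op (pairL (Pi.single j 1) v₀) = v₀ j
            rw [pairL_single_left, op_unop]
          rw [hco, hv₀]
        obtain ⟨z, hz⟩ := hesurj (Submodule.Quotient.mk ξ₀)
        refine ⟨z, ?_⟩
        show Θq (e z) = kk
        rw [hz]
        exact hΘξ₀
      -- contradiction with h
      let Gr : ↑(extMod Λ 1 Mq) →ₗ[Λᵐᵒᵖ] ↥K := G.codRestrict K hGmem
      have hzero := h Mq hMqfin (g ∘ₗ Gr)
      obtain ⟨z, hz⟩ := hKsub (gw : ↑N) gw.2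
      have hgz : g gw = 0 := by
        have h10 : Gr z = gw := Subtype.ext hz
        calc g gw = (g ∘ₗ Gr) z := by rw [LinearMap.comp_apply, h10]
          _ = 0 := by rw [hzero]; rfl
      exact hgw hgz
    exact LinearMap.ker_eq_bot.mp hKbot
  · -- torsionless → pure of grade 0
    intro htor
    refine ⟨hN0, ?_⟩
    intro A hA
    refine ⟨fun i hi => absurd hi (Nat.not_lt_zero i), ?_⟩
    rw [extVanish_zero_iff]
    intro hall
    obtain ⟨a, haA, ha0⟩ := (Submodule.ne_bot_iff A).mp hA
    have hea : evalDD Λᵐᵒᵖ ↑N a ≠ 0 := by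
      intro h0
      exact ha0 (htor (by rw [h0, map_zero]))
    obtain ⟨f, hf⟩ : ∃ f : ↑N →ₗ[Λᵐᵒᵖ] Λᵐᵒᵖ, f a ≠ 0 := by
      by_contra hc
      push_neg at hc
      exact hea (LinearMap.ext hc)
    have hres := hall (f ∘ₗ A.subtype)
    exact hf (DFunLike.congr_fun hres ⟨a, haA⟩)

end Stmt11
end Aux5

/-- If `Hom_Λ(Ext¹_Λ(M, Λ), Λ) = 0` for every finitely generated left
`Λ`-module `M`, then a non-zero finitely generated right `Λ`-module `N` is pure of grade `0`
iff it is torsionless. -/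
theorem pure_grade_zero_iff_torsionless (Λ : Type) [Ring Λ]
    [IsNoetherianRing Λ] [IsNoetherianRing Λᵐᵒᵖ]
    (h : ∀ M : ModuleCat.{0} Λ, Module.Finite Λ M →
      ∀ g : ↑(extMod Λ 1 M) →ₗ[Λᵐᵒᵖ] Λᵐᵒᵖ, g = 0)
    (N : ModuleCat.{0} Λᵐᵒᵖ) (hNfg : Module.Finite Λᵐᵒᵖ N) (hN0 : Nontrivial N) :
    pureGrade Λᵐᵒᵖ N 0 ↔ Torsionless Λᵐᵒᵖ N := by
  exact Stmt11.main Λ h N hNfg hN0
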